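/- arXiv:1803.01905 — 3 statements merged into one kernel-verified Lean document; each statement's English description precedes it below -/
import Mathlib

section
/- For gradient descent on the exponential loss over linearly separable data with fixed step size 0 < η < 1/L(w(0)), the normalized margin converges to the maximum margin at rate 1/log t: there exist a constant C > 0 and a time t₀ such that for all t > t₀, min_n ⟨w(t), x_n⟩ / ‖w(t)‖ ≥ γ − C / log t. -/
open scoped RealInnerProductSpace BigOperators
open Filter

/-- The exponential loss `L(w) = ∑ₙ exp(-⟨w, xₙ⟩)`. -/
noncomputable def expLoss {d N : ℕ} (x : Fin N → EuclideanSpace ℝ (Fin d))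
    (w : EuclideanSpace ℝ (Fin d)) : ℝ :=
  ∑ n, Real.exp (-⟪w, x n⟫)

/-- The gradient of the exponential loss, `∇L(w) = -∑ₙ exp(-⟨w, xₙ⟩) xₙ`. -/
noncomputable def expLossGrad {d N : ℕ} (x : Fin N → EuclideanSpace ℝ (Fin d))
    (w : EuclideanSpace ℝ (Fin d)) : EuclideanSpace ℝ (Fin d) :=
  -∑ n, Real.exp (-⟪w, x n⟫) • x n

/-!
Since `‖∇L‖ ≥ γ L`, the descent lemma gives `L(t+1) ≤ L(t) - c L(t)²`, so `L(t) ≤ 1/(ct)` and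
every margin `⟨w(t), xₙ⟩` is at least `ℓ(t) := -log L(t) ≥ log (ct)`. Conversely, a step of
length `η‖∇L‖` lowers `log L` by at least `γ η ‖∇L‖ - η² L²`, and `∑ L(s)² ≤ L(0)/c` is finite;
hence `γ‖w(t)‖ ≤ ℓ(t) + B` for a constant `B`, and the normalized margin is at least
`ℓ / ‖w(t)‖ ≥ γ - γB/ℓ`.
-/

open Finset

lemma Real.exp_le_one_add_add_sq {z : ℝ} (hz : |z| ≤ 1) : Real.exp z ≤ 1 + z + z ^ 2 := by
  linarith [le_abs_self (Real.exp z - 1 - z), Real.abs_exp_sub_one_sub_id_le hz]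

lemma Real.log_le_two_mul_log_mul {c t : ℝ} (hc : 0 < c) (ht : c⁻¹ ^ 2 ≤ t) :
    Real.log t ≤ 2 * Real.log (c * t) := by
  have ht0 : 0 < t := (by positivity : 0 < c⁻¹ ^ 2).trans_le ht
  have hlog : -(2 * Real.log c) ≤ Real.log t := by
    simpa [Real.log_pow, Real.log_inv] using Real.log_le_log (by positivity) ht
  rw [Real.log_mul hc.ne' ht0.ne']
  linarith

section QuadraticDecay

variable {a : ℕ → ℝ} {c : ℝ}

lemma inv_add_mul_le_inv_of_le_sub_mul_sq (ha : ∀ t, 0 < a t)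
    (hdecay : ∀ t, a (t + 1) ≤ a t - c * a t ^ 2) (t : ℕ) :
    (a 0)⁻¹ + c * t ≤ (a t)⁻¹ := by
  induction t with
  | zero => simp
  | succ t ih =>
    have hstep : (a t)⁻¹ + c ≤ (a (t + 1))⁻¹ := by
      rw [inv_eq_one_div (a (t + 1)), le_div_iff₀ (ha _)]
      rcases le_or_gt ((a t)⁻¹ + c) 0 with hneg | hpos
      · nlinarith [ha (t + 1)]
      · have hprod : ((a t)⁻¹ + c) * (a t - c * a t ^ 2) = 1 - (c * a t) ^ 2 := by
          field_simp [(ha t).ne']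
          ring
        nlinarith [mul_le_mul_of_nonneg_left (hdecay t) hpos.le, sq_nonneg (c * a t)]
    push_cast
    linarith

lemma mul_sum_range_sq_le_of_le_sub_mul_sq (ha : ∀ t, 0 ≤ a t)
    (hdecay : ∀ t, a (t + 1) ≤ a t - c * a t ^ 2) (t : ℕ) :
    c * ∑ s ∈ range t, a s ^ 2 ≤ a 0 :=
  calc c * ∑ s ∈ range t, a s ^ 2 ≤ ∑ s ∈ range t, (a s - a (s + 1)) := by
        rw [mul_sum]
        exact sum_le_sum fun s _ => by linarith [hdecay s]
    _ = a 0 - a t := sum_range_sub' a t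
    _ ≤ a 0 := by linarith [ha t]

end QuadraticDecay

lemma sub_mul_div_le_inf'_inner_div_norm {E ι : Type*} [NormedAddCommGroup E]
    [InnerProductSpace ℝ E] {s : Finset ι} (hs : s.Nonempty) {x : ι → E} {v : E}
    {γ ℓ B : ℝ} (hγ : 0 ≤ γ) (hℓ : 0 < ℓ) (hmargin : ∀ n ∈ s, ℓ ≤ ⟪v, x n⟫)
    (hnorm : γ * ‖v‖ ≤ ℓ + B) :
    γ - γ * B / ℓ ≤ s.inf' hs (fun n => ⟪v, x n⟫ / ‖v‖) := by
  obtain ⟨n₀, hn₀⟩ := hs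
  have hv : 0 < ‖v‖ := by
    refine norm_pos_iff.2 fun hv0 => ?_
    have := hmargin n₀ hn₀
    rw [hv0, inner_zero_left] at this
    linarith
  have hratio : γ - γ * B / ℓ ≤ ℓ / ‖v‖ := by
    rw [show γ - γ * B / ℓ = γ * (ℓ - B) / ℓ by field_simp, div_le_div_iff₀ hℓ hv]
    rcases le_or_gt B ℓ with hBℓ | hBℓ
    · nlinarith [mul_le_mul_of_nonneg_right hnorm (sub_nonneg.2 hBℓ), sq_nonneg B]
    · nlinarith [mul_nonneg hγ hv.le]
  exact le_inf' _ _ fun n hn => hratio.trans (div_le_div_of_nonneg_right (hmargin n hn) hv.le)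

lemma exists_sub_div_log_le_inf'_inner_div_norm {E ι : Type*} [NormedAddCommGroup E]
    [InnerProductSpace ℝ E] {s : Finset ι} (hs : s.Nonempty) {x : ι → E} {v : ℕ → E}
    {L : ℕ → ℝ} {γ c B : ℝ} (hγ : 0 < γ) (hc : 0 < c) (hL : ∀ t : ℕ, c * t ≤ (L t)⁻¹)
    (hmargin : ∀ t, ∀ n ∈ s, -Real.log (L t) ≤ ⟪v t, x n⟫)
    (hnorm : ∀ t, γ * ‖v t‖ ≤ -Real.log (L t) + B) :
    ∃ C > 0, ∃ t₀ : ℕ, ∀ t : ℕ, t > t₀ →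
      γ - C / Real.log t ≤ s.inf' hs fun n => ⟪v t, x n⟫ / ‖v t‖ := by
  refine ⟨2 * γ * max B 1, by positivity, ⌈max 1 (c⁻¹ ^ 2)⌉₊, fun t ht => ?_⟩
  have ht' : max 1 (c⁻¹ ^ 2) < (t : ℝ) := Nat.lt_of_ceil_lt ht
  have ht1 : 1 < (t : ℝ) := (le_max_left _ _).trans_lt ht'
  have hlogt : 0 < Real.log t := Real.log_pos ht1
  have hct : Real.log (c * t) ≤ -Real.log (L t) := by
    rw [← Real.log_inv]
    exact Real.log_le_log (mul_pos hc (by linarith)) (hL t)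
  set ℓ := -Real.log (L t)
  have hℓ : Real.log t / 2 ≤ ℓ := by
    linarith [Real.log_le_two_mul_log_mul hc ((le_max_right _ _).trans ht'.le)]
  have hM : 0 ≤ γ * max B 1 := by positivity
  calc γ - 2 * γ * max B 1 / Real.log t ≤ γ - γ * max B 1 / ℓ := by
        rw [sub_le_sub_iff_left, div_le_div_iff₀ (by linarith) hlogt]
        nlinarith [mul_le_mul_of_nonneg_left hℓ hM]
    _ ≤ γ - γ * B / ℓ := by
        gcongr
        · linarith
        · exact le_max_left B 1
    _ ≤ _ := sub_mul_div_le_inf'_inner_div_norm hs hγ.le (by linarith) (hmargin t) (hnorm t)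

lemma pos_of_mem_upperBounds_margins {E ι : Type*} [NormedAddCommGroup E]
    [InnerProductSpace ℝ E] {s : Finset ι} (hs : s.Nonempty) {x : ι → E}
    (hsep : ∃ v : E, ∀ n ∈ s, 0 < ⟪v, x n⟫) {γ : ℝ}
    (hγ : γ ∈ upperBounds {m : ℝ | ∃ u : E, ‖u‖ = 1 ∧ m = s.inf' hs fun n => ⟪u, x n⟫}) :
    0 < γ := by
  obtain ⟨v, hv⟩ := hsep
  obtain ⟨n₀, hn₀⟩ := hs
  have hv0 : v ≠ 0 := fun h => by simpa [h] using hv n₀ hn₀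
  refine lt_of_lt_of_le ((lt_inf'_iff _).2 fun n hn => ?_)
    (hγ ⟨_, norm_smul_inv_norm (𝕜 := ℝ) hv0, rfl⟩)
  rw [real_inner_smul_left]
  exact mul_pos (inv_pos.2 (norm_pos_iff.2 hv0)) (hv n hn)

section ExpLoss

variable {d N : ℕ} (x : Fin N → EuclideanSpace ℝ (Fin d))

lemma expLoss_pos (hN : (univ : Finset (Fin N)).Nonempty) (w : EuclideanSpace ℝ (Fin d)) :
    0 < expLoss x w :=
  sum_pos (fun _ _ => Real.exp_pos _) hN

lemma expLoss_nonneg (w : EuclideanSpace ℝ (Fin d)) : 0 ≤ expLoss x w :=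
  sum_nonneg fun _ _ => (Real.exp_pos _).le

lemma neg_log_expLoss_le_inner (w : EuclideanSpace ℝ (Fin d)) (n : Fin N) :
    -Real.log (expLoss x w) ≤ ⟪w, x n⟫ := by
  have hn : Real.exp (-⟪w, x n⟫) ≤ expLoss x w :=
    single_le_sum (f := fun m => Real.exp (-⟪w, x m⟫)) (fun m _ => (Real.exp_pos _).le)
      (mem_univ n)
  linarith [(Real.le_log_iff_exp_le ((Real.exp_pos _).trans_le hn)).2 hn]

lemma inner_expLossGrad (w v : EuclideanSpace ℝ (Fin d)) :
    ⟪expLossGrad x w, v⟫ = -∑ n, Real.exp (-⟪w, x n⟫) * ⟪x n, v⟫ := by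
  simp only [expLossGrad, inner_neg_left, sum_inner, real_inner_smul_left]

lemma norm_expLossGrad_le (hx : ∀ n, ‖x n‖ ≤ 1) (w : EuclideanSpace ℝ (Fin d)) :
    ‖expLossGrad x w‖ ≤ expLoss x w := by
  rw [expLossGrad, norm_neg]
  refine (norm_sum_le _ _).trans (sum_le_sum fun n _ => ?_)
  rw [norm_smul, Real.norm_of_nonneg (Real.exp_pos _).le]
  exact mul_le_of_le_one_right (Real.exp_pos _).le (hx n)

lemma mul_expLoss_le_norm_expLossGrad {u : EuclideanSpace ℝ (Fin d)} (hu : ‖u‖ ≤ 1) {γ : ℝ}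
    (hγ : ∀ n, γ ≤ ⟪u, x n⟫) (w : EuclideanSpace ℝ (Fin d)) :
    γ * expLoss x w ≤ ‖expLossGrad x w‖ :=
  calc γ * expLoss x w ≤ -⟪expLossGrad x w, u⟫ := by
        rw [inner_expLossGrad, neg_neg, expLoss, mul_sum]
        refine sum_le_sum fun n _ => ?_
        rw [mul_comm, real_inner_comm u]
        exact mul_le_mul_of_nonneg_left (hγ n) (Real.exp_pos _).le
    _ ≤ ‖expLossGrad x w‖ * ‖u‖ := (neg_le_abs _).trans (abs_real_inner_le_norm _ _)
    _ ≤ ‖expLossGrad x w‖ := mul_le_of_le_one_right (norm_nonneg _) hu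

lemma expLoss_add_le (hx : ∀ n, ‖x n‖ ≤ 1) (w : EuclideanSpace ℝ (Fin d))
    {v : EuclideanSpace ℝ (Fin d)} (hv : ‖v‖ ≤ 1) :
    expLoss x (w + v) ≤ expLoss x w + ⟪expLossGrad x w, v⟫ + expLoss x w * ‖v‖ ^ 2 := by
  have hterm : ∀ n, Real.exp (-⟪w + v, x n⟫) ≤
      Real.exp (-⟪w, x n⟫) * (1 - ⟪x n, v⟫ + ‖v‖ ^ 2) := fun n => by
    have hxv : |⟪x n, v⟫| ≤ ‖v‖ :=
      (abs_real_inner_le_norm _ _).trans (mul_le_of_le_one_left (norm_nonneg _) (hx n))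
    have hexp : Real.exp (-⟪x n, v⟫) ≤ 1 - ⟪x n, v⟫ + ‖v‖ ^ 2 := by
      have := Real.exp_le_one_add_add_sq (z := -⟪x n, v⟫) (by rw [abs_neg]; exact hxv.trans hv)
      nlinarith [sq_abs ⟪x n, v⟫, abs_nonneg ⟪x n, v⟫]
    rw [inner_add_left, real_inner_comm (x n) v, neg_add, Real.exp_add]
    exact mul_le_mul_of_nonneg_left hexp (Real.exp_pos _).le
  calc expLoss x (w + v) ≤ ∑ n, Real.exp (-⟪w, x n⟫) * (1 - ⟪x n, v⟫ + ‖v‖ ^ 2) :=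
        sum_le_sum fun n _ => hterm n
    _ = expLoss x w + ⟪expLossGrad x w, v⟫ + expLoss x w * ‖v‖ ^ 2 := by
        simp only [mul_add, mul_sub, mul_one, sum_add_distrib, sum_sub_distrib, ← sum_mul,
          inner_expLossGrad, expLoss]
        ring

lemma expLoss_sub_smul_expLossGrad_le (hx : ∀ n, ‖x n‖ ≤ 1) (w : EuclideanSpace ℝ (Fin d))
    {η : ℝ} (hη : 0 ≤ η) (hηL : η * expLoss x w ≤ 1) :
    expLoss x (w - η • expLossGrad x w) ≤
      expLoss x w - (1 - η * expLoss x w) * η * ‖expLossGrad x w‖ ^ 2 := by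
  have hv : ‖-(η • expLossGrad x w)‖ ≤ 1 := by
    rw [norm_neg, norm_smul, Real.norm_of_nonneg hη]
    exact (mul_le_mul_of_nonneg_left (norm_expLossGrad_le x hx w) hη).trans hηL
  have h := expLoss_add_le x hx w hv
  rw [← sub_eq_add_neg, inner_neg_right, real_inner_smul_right, real_inner_self_eq_norm_sq,
    norm_neg, norm_smul, Real.norm_of_nonneg hη] at h
  linarith

lemma mul_norm_smul_expLossGrad_le (hN : (univ : Finset (Fin N)).Nonempty)
    (hx : ∀ n, ‖x n‖ ≤ 1) {u : EuclideanSpace ℝ (Fin d)} (hu : ‖u‖ ≤ 1) {γ : ℝ}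
    (hγ : ∀ n, γ ≤ ⟪u, x n⟫) (w : EuclideanSpace ℝ (Fin d)) {η : ℝ} (hη : 0 ≤ η)
    (hηL : η * expLoss x w ≤ 1) :
    γ * ‖η • expLossGrad x w‖ ≤ Real.log (expLoss x w) -
      Real.log (expLoss x (w - η • expLossGrad x w)) + η ^ 2 * expLoss x w ^ 2 := by
  have hL := expLoss_pos x hN w
  have hL' := expLoss_pos x hN (w - η • expLossGrad x w)
  have hdescent := expLoss_sub_smul_expLossGrad_le x hx w hη hηL
  have hlower := mul_expLoss_le_norm_expLossGrad x hu hγ w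
  have hupper := norm_expLossGrad_le x hx w
  have hlog : 1 - expLoss x (w - η • expLossGrad x w) / expLoss x w ≤
      Real.log (expLoss x w) - Real.log (expLoss x (w - η • expLossGrad x w)) := by
    rw [← Real.log_div hL.ne' hL'.ne', ← inv_div]
    exact Real.one_sub_inv_le_log_of_pos (div_pos hL hL')
  rw [norm_smul, Real.norm_of_nonneg hη]
  suffices γ * (η * ‖expLossGrad x w‖) - η ^ 2 * expLoss x w ^ 2 ≤
      1 - expLoss x (w - η • expLossGrad x w) / expLoss x w by linarith
  rw [one_sub_div hL.ne', le_div_iff₀ hL]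
  nlinarith [mul_nonneg (mul_nonneg hη (norm_nonneg (expLossGrad x w))) (sub_nonneg.2 hlower),
    mul_nonneg (mul_nonneg (sq_nonneg η) hL.le)
      (mul_nonneg (sub_nonneg.2 hupper) (add_nonneg (norm_nonneg (expLossGrad x w)) hL.le))]

end ExpLoss

section GradientDescent

variable {d N : ℕ} {x : Fin N → EuclideanSpace ℝ (Fin d)} {η : ℝ}
  {w : ℕ → EuclideanSpace ℝ (Fin d)}

lemma expLoss_gd_le_initial (hx : ∀ n, ‖x n‖ ≤ 1) (hη : 0 ≤ η)
    (hηL : η * expLoss x (w 0) ≤ 1) (hGD : ∀ t, w (t + 1) = w t - η • expLossGrad x (w t))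
    (t : ℕ) : expLoss x (w t) ≤ expLoss x (w 0) := by
  induction t with
  | zero => rfl
  | succ t ih =>
    have hηLt : η * expLoss x (w t) ≤ 1 := (mul_le_mul_of_nonneg_left ih hη).trans hηL
    have hdescent := expLoss_sub_smul_expLossGrad_le x hx (w t) hη hηLt
    have hdecrease : 0 ≤ (1 - η * expLoss x (w t)) * η * ‖expLossGrad x (w t)‖ ^ 2 := by
      have := sub_nonneg.2 hηLt
      positivity
    rw [hGD t]
    linarith

lemma expLoss_gd_succ_le (hx : ∀ n, ‖x n‖ ≤ 1) {u : EuclideanSpace ℝ (Fin d)} (hu : ‖u‖ ≤ 1)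
    {γ : ℝ} (hγ0 : 0 ≤ γ) (hγ : ∀ n, γ ≤ ⟪u, x n⟫) (hη : 0 ≤ η)
    (hηL : η * expLoss x (w 0) ≤ 1) (hGD : ∀ t, w (t + 1) = w t - η • expLossGrad x (w t))
    (t : ℕ) :
    expLoss x (w (t + 1)) ≤
      expLoss x (w t) - (1 - η * expLoss x (w 0)) * η * γ ^ 2 * expLoss x (w t) ^ 2 := by
  have hLt := expLoss_gd_le_initial hx hη hηL hGD t
  have hηLt : η * expLoss x (w t) ≤ 1 := (mul_le_mul_of_nonneg_left hLt hη).trans hηL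
  have hdescent := expLoss_sub_smul_expLossGrad_le x hx (w t) hη hηLt
  have hgrad : (γ * expLoss x (w t)) ^ 2 ≤ ‖expLossGrad x (w t)‖ ^ 2 :=
    pow_le_pow_left₀ (mul_nonneg hγ0 (expLoss_nonneg x _))
      (mul_expLoss_le_norm_expLossGrad x hu hγ _) 2
  have hrate : (1 - η * expLoss x (w 0)) * η ≤ (1 - η * expLoss x (w t)) * η :=
    mul_le_mul_of_nonneg_right (by linarith [mul_le_mul_of_nonneg_left hLt hη]) hη
  rw [hGD t]
  nlinarith [mul_le_mul hrate hgrad (sq_nonneg _) (mul_nonneg (sub_nonneg.2 hηLt) hη)]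

lemma mul_le_inv_expLoss_gd (hN : (univ : Finset (Fin N)).Nonempty) (hx : ∀ n, ‖x n‖ ≤ 1)
    {u : EuclideanSpace ℝ (Fin d)} (hu : ‖u‖ ≤ 1) {γ : ℝ} (hγ0 : 0 ≤ γ)
    (hγ : ∀ n, γ ≤ ⟪u, x n⟫) (hη : 0 ≤ η) (hηL : η * expLoss x (w 0) ≤ 1)
    (hGD : ∀ t, w (t + 1) = w t - η • expLossGrad x (w t)) (t : ℕ) :
    (1 - η * expLoss x (w 0)) * η * γ ^ 2 * t ≤ (expLoss x (w t))⁻¹ := by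
  linarith [inv_add_mul_le_inv_of_le_sub_mul_sq (fun s => expLoss_pos x hN (w s))
    (expLoss_gd_succ_le hx hu hγ0 hγ hη hηL hGD) t, inv_pos.2 (expLoss_pos x hN (w 0))]

lemma mul_norm_gd_le (hN : (univ : Finset (Fin N)).Nonempty) (hx : ∀ n, ‖x n‖ ≤ 1)
    {u : EuclideanSpace ℝ (Fin d)} (hu : ‖u‖ ≤ 1) {γ : ℝ} (hγ0 : 0 ≤ γ)
    (hγ : ∀ n, γ ≤ ⟪u, x n⟫) (hη : 0 ≤ η) (hηL : η * expLoss x (w 0) ≤ 1)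
    (hGD : ∀ t, w (t + 1) = w t - η • expLossGrad x (w t)) (t : ℕ) :
    γ * ‖w t‖ ≤ γ * ‖w 0‖ + Real.log (expLoss x (w 0)) - Real.log (expLoss x (w t)) +
      η ^ 2 * ∑ s ∈ range t, expLoss x (w s) ^ 2 := by
  have hstep : ∀ s, γ * dist (w s) (w (s + 1)) ≤ Real.log (expLoss x (w s)) -
      Real.log (expLoss x (w (s + 1))) + η ^ 2 * expLoss x (w s) ^ 2 := fun s => by
    rw [dist_eq_norm, hGD s, sub_sub_cancel]
    exact mul_norm_smul_expLossGrad_le x hN hx hu hγ (w s) hη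
      ((mul_le_mul_of_nonneg_left (expLoss_gd_le_initial hx hη hηL hGD s) hη).trans hηL)
  calc γ * ‖w t‖ ≤ γ * (‖w 0‖ + dist (w 0) (w t)) := by
        rw [dist_comm, dist_eq_norm]
        exact mul_le_mul_of_nonneg_left (norm_le_norm_add_norm_sub' _ _) hγ0
    _ ≤ γ * (‖w 0‖ + ∑ s ∈ range t, dist (w s) (w (s + 1))) := by
        gcongr
        exact dist_le_range_sum_dist w t
    _ ≤ γ * ‖w 0‖ + ∑ s ∈ range t, (Real.log (expLoss x (w s)) -
          Real.log (expLoss x (w (s + 1))) + η ^ 2 * expLoss x (w s) ^ 2) := by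
        rw [mul_add, mul_sum]
        gcongr with s
        exact hstep s
    _ = _ := by
        rw [sum_add_distrib, sum_range_sub' (fun s => Real.log (expLoss x (w s))), ← mul_sum]
        ring

lemma mul_norm_gd_le_neg_log_expLoss_add (hN : (univ : Finset (Fin N)).Nonempty)
    (hx : ∀ n, ‖x n‖ ≤ 1) {u : EuclideanSpace ℝ (Fin d)} (hu : ‖u‖ ≤ 1) {γ : ℝ} (hγ0 : 0 < γ)
    (hγ : ∀ n, γ ≤ ⟪u, x n⟫) (hη : 0 < η) (hηL : η * expLoss x (w 0) < 1)
    (hGD : ∀ t, w (t + 1) = w t - η • expLossGrad x (w t)) (t : ℕ) :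
    γ * ‖w t‖ ≤ -Real.log (expLoss x (w t)) + (γ * ‖w 0‖ + Real.log (expLoss x (w 0)) +
      η ^ 2 * (expLoss x (w 0) / ((1 - η * expLoss x (w 0)) * η * γ ^ 2))) := by
  have hc : 0 < (1 - η * expLoss x (w 0)) * η * γ ^ 2 := by
    have := sub_pos.2 hηL
    positivity
  have hsum : ∑ s ∈ range t, expLoss x (w s) ^ 2 ≤
      expLoss x (w 0) / ((1 - η * expLoss x (w 0)) * η * γ ^ 2) := by
    rw [le_div_iff₀ hc, mul_comm]
    exact mul_sum_range_sq_le_of_le_sub_mul_sq (fun s => expLoss_nonneg x (w s))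
      (expLoss_gd_succ_le hx hu hγ0.le hγ hη.le hηL.le hGD) t
  linarith [mul_norm_gd_le hN hx hu hγ0.le hγ hη.le hηL.le hGD t,
    mul_le_mul_of_nonneg_left hsum (sq_nonneg η)]

end GradientDescent

/-- Gradient descent on the exponential loss over separable data with fixed step size
`0 < η < 1/L(w(0))` drives the normalized margin to the max margin `γ` at rate `1/log t`. -/
theorem gd_expLoss_margin_rate_log
    {d N : ℕ} (x : Fin N → EuclideanSpace ℝ (Fin d))
    (hx : ∀ n, ‖x n‖ ≤ 1)
    (hsep : ∃ wstar : EuclideanSpace ℝ (Fin d), ∀ n, 0 < ⟪wstar, x n⟫)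
    (hNe : (Finset.univ : Finset (Fin N)).Nonempty)
    (γ : ℝ)
    (hγ : IsGreatest {m : ℝ | ∃ u : EuclideanSpace ℝ (Fin d), ‖u‖ = 1 ∧
        m = Finset.univ.inf' hNe (fun n => ⟪u, x n⟫)} γ)
    (η : ℝ) (w : ℕ → EuclideanSpace ℝ (Fin d))
    (hη : 0 < η) (hη' : η < 1 / expLoss x (w 0))
    (hGD : ∀ t : ℕ, w (t + 1) = w t - η • expLossGrad x (w t)) :
    ∃ C > 0, ∃ t₀ : ℕ, ∀ t : ℕ, t > t₀ →
      γ - C / Real.log t ≤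
        Finset.univ.inf' hNe (fun n => ⟪w t, x n⟫ / ‖w t‖) := by
  obtain ⟨u, hu, hγu⟩ := hγ.1
  have hγx : ∀ n, γ ≤ ⟪u, x n⟫ := fun n => hγu ▸ inf'_le _ (mem_univ n)
  have hγ0 : 0 < γ :=
    pos_of_mem_upperBounds_margins hNe (hsep.imp fun v hv n _ => hv n) hγ.2
  have hηL : η * expLoss x (w 0) < 1 := (lt_div_iff₀ (expLoss_pos x hNe _)).1 hη'
  have hc : 0 < (1 - η * expLoss x (w 0)) * η * γ ^ 2 := by
    have := sub_pos.2 hηL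
    positivity
  exact exists_sub_div_log_le_inf'_inner_div_norm hNe hγ0 hc
    (mul_le_inv_expLoss_gd hNe hx hu.le hγ0.le hγx hη.le hηL.le hGD)
    (fun t n _ => neg_log_expLoss_le_inner x (w t) n)
    (mul_norm_gd_le_neg_log_expLoss_add hNe hx hu.le hγ0 hγx hη hηL hGD)
end

section
/- Non-convergence to the max margin for a polynomial-tailed loss under gradient flow: let w₁, w₂ : [0, ∞) → ℝ be differentiable functions with w₁(0) > 0 and w₂(0) > 0 satisfying w₁'(t) = w₁(t)^{−2} and w₂'(t) = (1/2) w₂(t)^{−2} for all t ≥ 0. Then w₁(t) = (3t + w₁(0)³)^{1/3} and w₂(t) = ((3/2)t + w₂(0)³)^{1/3} for all t ≥ 0, and lim_{t→∞} w₁(t)/w₂(t) = 2^{1/3}; in particular the limit differs from 2, the ratio ŵ₁/ŵ₂ of the coordinates of the L2 max-margin separator ŵ = (1, 1/2). -/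
/-!
Along the flow `f' = c f⁻²` the quantity `f³ - 3ct` has derivative zero, so each coordinate is an
explicit cube root of an affine function of `t`. The ratio of the two affine functions tends to
the ratio `2` of their slopes, hence the ratio of the coordinates tends to `2^{1/3}`, not `2`.
-/

open Filter Set Topology

section CubeRootFlow

variable {f : ℝ → ℝ} {c : ℝ}

lemma pos_of_hasDerivAt_mul_inv_sq (hc : 0 ≤ c) (hf0 : 0 < f 0)
    (hd : ∀ t, 0 ≤ t → HasDerivAt f (c * (f t ^ 2)⁻¹) t) {t : ℝ} (ht : 0 ≤ t) : 0 < f t := by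
  have hmono : MonotoneOn f (Ici 0) := by
    refine monotoneOn_of_deriv_nonneg (convex_Ici 0)
      (fun s hs => (hd s hs).continuousAt.continuousWithinAt) ?_ ?_
    · rw [interior_Ici]
      exact fun s hs => (hd s (le_of_lt hs)).differentiableAt.differentiableWithinAt
    · rw [interior_Ici]
      intro s hs
      rw [(hd s (le_of_lt hs)).deriv]
      positivity
  exact hf0.trans_le (hmono self_mem_Ici ht ht)

lemma pow_three_eq_of_hasDerivAt_mul_inv_sq (hc : 0 ≤ c) (hf0 : 0 < f 0)
    (hd : ∀ t, 0 ≤ t → HasDerivAt f (c * (f t ^ 2)⁻¹) t) {t : ℝ} (ht : 0 ≤ t) :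
    f t ^ 3 = 3 * c * t + f 0 ^ 3 := by
  have hderiv : ∀ s, 0 ≤ s → HasDerivAt (fun s => f s ^ 3 - 3 * c * s) 0 s := by
    intro s hs
    have hfs : f s ≠ 0 := (pos_of_hasDerivAt_mul_inv_sq hc hf0 hd hs).ne'
    refine (((hd s hs).pow 3).sub ((hasDerivAt_id s).const_mul (3 * c))).congr_deriv ?_
    norm_num
    field_simp
    ring
  have hconst := constant_of_has_deriv_right_zero
    (fun s hs => (hderiv s hs.1).continuousAt.continuousWithinAt)
    (fun s hs => (hderiv s hs.1).hasDerivWithinAt) t (right_mem_Icc.mpr ht)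
  simp only [mul_zero, sub_zero] at hconst
  linarith

lemma eq_rpow_of_hasDerivAt_mul_inv_sq (hc : 0 ≤ c) (hf0 : 0 < f 0)
    (hd : ∀ t, 0 ≤ t → HasDerivAt f (c * (f t ^ 2)⁻¹) t) {t : ℝ} (ht : 0 ≤ t) :
    f t = (3 * c * t + f 0 ^ 3) ^ ((1 : ℝ) / 3) := by
  rw [← pow_three_eq_of_hasDerivAt_mul_inv_sq hc hf0 hd ht, ← Real.rpow_natCast,
    ← Real.rpow_mul (pos_of_hasDerivAt_mul_inv_sq hc hf0 hd ht).le]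
  norm_num

end CubeRootFlow

lemma tendsto_affine_div_affine_atTop (a b c d : ℝ) (hc : c ≠ 0) :
    Tendsto (fun t => (a * t + b) / (c * t + d)) atTop (𝓝 (a / c)) := by
  have hlim : Tendsto (fun t => (a + b / t) / (c + d / t)) atTop (𝓝 (a / c)) := by
    have hinv (x : ℝ) : Tendsto (fun t => x / t) atTop (𝓝 0) :=
      tendsto_const_nhds.div_atTop tendsto_id
    have hb : Tendsto (fun t => a + b / t) atTop (𝓝 a) := by simpa using (hinv b).const_add a
    have hd : Tendsto (fun t => c + d / t) atTop (𝓝 c) := by simpa using (hinv d).const_add c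
    exact hb.div hd hc
  refine hlim.congr' ?_
  filter_upwards [eventually_gt_atTop 0] with t ht
  rw [← mul_div_mul_right _ _ ht.ne']
  congr 1 <;> field_simp

lemma tendsto_rpow_affine_div_rpow_affine_atTop {a b c d : ℝ} (ha : 0 < a) (hb : 0 ≤ b)
    (hc : 0 < c) (hd : 0 ≤ d) (p : ℝ) :
    Tendsto (fun t => (a * t + b) ^ p / (c * t + d) ^ p) atTop (𝓝 ((a / c) ^ p)) := by
  have hrpow := (Real.continuousAt_rpow_const (a / c) p (Or.inl (div_pos ha hc).ne')).tendsto
  refine (hrpow.comp (tendsto_affine_div_affine_atTop a b c d hc.ne')).congr' ?_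
  filter_upwards [eventually_ge_atTop 0] with t ht
  exact Real.div_rpow (by positivity) (by positivity) p

/-- Non-convergence to the max margin for a polynomial-tailed loss under gradient flow:
for the dataset `x₁ = (1,0)`, `x₂ = (0,2)` with loss tail `−ℓ'(u) = u⁻²`, the gradient flow
`w₁' = w₁⁻²`, `w₂' = (1/2) w₂⁻²` has explicit solutions whose direction ratio tends to
`2^{1/3} ≠ 2 = ŵ₁/ŵ₂`, the coordinate ratio of the max-margin separator `ŵ = (1, 1/2)`. -/
theorem gradient_flow_powerlaw_not_max_margin
    (w₁ w₂ : ℝ → ℝ)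
    (hw₁0 : 0 < w₁ 0) (hw₂0 : 0 < w₂ 0)
    (hd₁ : ∀ t : ℝ, 0 ≤ t → HasDerivAt w₁ ((w₁ t ^ 2)⁻¹) t)
    (hd₂ : ∀ t : ℝ, 0 ≤ t → HasDerivAt w₂ ((1 / 2) * (w₂ t ^ 2)⁻¹) t) :
    (∀ t : ℝ, 0 ≤ t →
      w₁ t = (3 * t + w₁ 0 ^ 3) ^ ((1 : ℝ) / 3) ∧
      w₂ t = ((3 / 2) * t + w₂ 0 ^ 3) ^ ((1 : ℝ) / 3)) ∧
    Tendsto (fun t => w₁ t / w₂ t) atTop (nhds ((2 : ℝ) ^ ((1 : ℝ) / 3))) ∧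
    (2 : ℝ) ^ ((1 : ℝ) / 3) ≠ 2 := by
  have hw₁ : ∀ t : ℝ, 0 ≤ t → w₁ t = (3 * t + w₁ 0 ^ 3) ^ ((1 : ℝ) / 3) := fun t ht => by
    simpa using eq_rpow_of_hasDerivAt_mul_inv_sq zero_le_one hw₁0 (by simpa using hd₁) ht
  have hw₂ : ∀ t : ℝ, 0 ≤ t → w₂ t = ((3 / 2) * t + w₂ 0 ^ 3) ^ ((1 : ℝ) / 3) := fun t ht => by
    rw [eq_rpow_of_hasDerivAt_mul_inv_sq (by norm_num) hw₂0 hd₂ ht]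
    norm_num
  refine ⟨fun t ht => ⟨hw₁ t ht, hw₂ t ht⟩, ?_, (Real.rpow_lt_self_of_one_lt one_lt_two
    (by norm_num)).ne⟩
  have hratio := tendsto_rpow_affine_div_rpow_affine_atTop three_pos (pow_pos hw₁0 3).le
    (by norm_num : (0 : ℝ) < 3 / 2) (pow_pos hw₂0 3).le ((1 : ℝ) / 3)
  norm_num at hratio
  refine hratio.congr' ?_
  filter_upwards [eventually_ge_atTop 0] with t ht
  rw [hw₁ t ht, hw₂ t ht]
end

section
/- Convergence to the max margin for sub-poly-exponential tails under gradient flow: fix ε > 1, and let w₁, w₂ : [0, ∞) → ℝ be differentiable with w₁(0) > e and 2w₂(0) > e, satisfying w₁'(t) = exp(−(log w₁(t))^ε) · w₁(t) / (ε (log w₁(t))^{ε−1}) and w₂'(t) = 2 · exp(−(log(2w₂(t)))^ε) · (2w₂(t)) / (ε (log(2w₂(t)))^{ε−1}) for all t ≥ 0. Then w₁(t) = exp((log(t + C̃₁))^{1/ε}) and 2w₂(t) = exp((log(4t + C̃₂))^{1/ε}) where C̃₁ = exp((log w₁(0))^ε) and C̃₂ = exp((log(2w₂(0)))^ε), and lim_{t→∞}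 w₁(t)/w₂(t) = 2 = ŵ₁/ŵ₂, the ratio of the coordinates of the L2 max-margin separator ŵ = (1, 1/2). -/
/-!
Along the flow `w' = a · exp(-(log w)^ε) · w / (ε (log w)^(ε-1))` the potential
`exp((log w)^ε)` grows at the constant rate `a`, which gives the closed forms
`w₁(t) = exp(log(t + C₁)^(1/ε))` and `2 w₂(t) = exp(log(4t + C₂)^(1/ε))`.
Since `log(4t + C₂) - log(t + C₁)` stays bounded while both logarithms diverge, and
`x ↦ x^(1/ε)` has vanishing slope at infinity when `ε > 1`, the exponents differ by `o(1)`;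
hence `w₁ / (2 w₂) → 1`.
-/

open Filter Topology Real Set

/-- The velocity `a · (-ℓ'(u))` of a margin `u` under the flow: `a = 1` for `u = w₁`, and
`a = 4` for `u = 2 w₂` since `x₂ = (0, 2)` contributes the chain-rule factor `2` twice. -/
noncomputable def subpolyexpVelocity (ε a u : ℝ) : ℝ :=
  a * (exp (-(log u ^ ε)) * u / (ε * log u ^ (ε - 1)))

lemma subpolyexpVelocity_pos {ε a u : ℝ} (hε : 0 < ε) (ha : 0 < a) (hu : 1 < u) :
    0 < subpolyexpVelocity ε a u := by
  have hlog : 0 < log u := log_pos hu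
  unfold subpolyexpVelocity
  positivity

lemma hasDerivAt_exp_log_rpow_of_subpolyexpVelocity {ε a t : ℝ} {w : ℝ → ℝ} (hε : 0 < ε)
    (hwt : 1 < w t) (hw : HasDerivAt w (subpolyexpVelocity ε a (w t)) t) :
    HasDerivAt (fun s => exp (log (w s) ^ ε)) a t := by
  have hw0 : 0 < w t := one_pos.trans hwt
  have hlog : 0 < log (w t) := log_pos hwt
  have hchain := ((hw.log hw0.ne').rpow_const (p := ε) (Or.inl hlog.ne')).exp
  refine hchain.congr_deriv ?_
  have hexp : exp (log (w t) ^ ε) * exp (-(log (w t) ^ ε)) = 1 := by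
    rw [← exp_add, add_neg_cancel, exp_zero]
  have hpow : log (w t) ^ (ε - 1) ≠ 0 := (rpow_pos_of_pos hlog _).ne'
  unfold subpolyexpVelocity
  field_simp
  linear_combination a * hexp

lemma le_of_deriv_pos_at_level {w w' : ℝ → ℝ} {c : ℝ}
    (hw : ∀ t, 0 ≤ t → HasDerivAt w (w' t) t) (h0 : c ≤ w 0)
    (hpos : ∀ t, 0 ≤ t → w t = c → 0 < w' t) {t : ℝ} (ht : 0 ≤ t) : c ≤ w t := by
  have hneg : ∀ x ∈ Icc 0 t, HasDerivAt (fun s => -w s) (-w' x) x :=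
    fun x hx => (hw x hx.1).neg
  have hfence := image_le_of_deriv_right_lt_deriv_boundary (f := fun s => -w s) (B := fun _ => -c)
    (fun x hx => (hneg x hx).continuousAt.continuousWithinAt)
    (fun x hx => (hneg x (Ico_subset_Icc_self hx)).hasDerivWithinAt)
    (neg_le_neg h0) (fun _ => hasDerivAt_const _ _)
    (fun x hx hx_eq => neg_neg_of_pos (hpos x hx.1 (neg_inj.mp hx_eq)))
    (right_mem_Icc.mpr ht)
  exact neg_le_neg_iff.mp hfence

lemma eq_exp_log_rpow_of_subpolyexpVelocity {ε a : ℝ} {w : ℝ → ℝ} (hε : 0 < ε) (ha : 0 < a)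
    (hw0 : exp 1 < w 0)
    (hw : ∀ t, 0 ≤ t → HasDerivAt w (subpolyexpVelocity ε a (w t)) t) {t : ℝ} (ht : 0 ≤ t) :
    w t = exp (log (a * t + exp (log (w 0) ^ ε)) ^ (1 / ε)) := by
  have hgt_one : 1 < exp 1 := one_lt_exp_iff.mpr one_pos
  have habove : ∀ s, 0 ≤ s → exp 1 ≤ w s := fun s hs =>
    le_of_deriv_pos_at_level hw hw0.le
      (fun x _ hx => subpolyexpVelocity_pos hε ha (hx ▸ hgt_one)) hs
  have hpotential : ∀ s ∈ Icc 0 t,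
      HasDerivAt (fun s => exp (log (w s) ^ ε) - a * s) 0 s := fun s hs => by
    have h := (hasDerivAt_exp_log_rpow_of_subpolyexpVelocity hε
      (hgt_one.trans_le (habove s hs.1)) (hw s hs.1)).sub ((hasDerivAt_id' s).const_mul a)
    rwa [mul_one, sub_self] at h
  have hconst := constant_of_has_deriv_right_zero
    (fun s hs => (hpotential s hs).continuousAt.continuousWithinAt)
    (fun s hs => (hpotential s (Ico_subset_Icc_self hs)).hasDerivWithinAt) t (right_mem_Icc.mpr ht)
  have hwt : 1 < w t := hgt_one.trans_le (habove t ht)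
  have hinv : a * t + exp (log (w 0) ^ ε) = exp (log (w t) ^ ε) := by
    simp only [mul_zero, sub_zero] at hconst
    linarith
  rw [hinv, log_exp, ← rpow_mul (log_pos hwt).le, mul_one_div_cancel hε.ne', rpow_one,
    exp_log (one_pos.trans hwt)]

lemma rpow_sub_rpow_le_mul_rpow_sub_one {x y δ : ℝ} (hy : 0 < y) (hyx : y ≤ x) (hδ : δ ≤ 1) :
    x ^ δ - y ^ δ ≤ (x - y) * y ^ (δ - 1) := by
  have hx : 0 < x := hy.trans_le hyx
  have hmono : x ^ (δ - 1) ≤ y ^ (δ - 1) := rpow_le_rpow_of_nonpos hy hyx (by linarith)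
  have hsplit : ∀ z : ℝ, 0 < z → z ^ δ = z * z ^ (δ - 1) := fun z hz => by
    rw [rpow_sub_one hz.ne', mul_div_cancel₀ _ hz.ne']
  rw [hsplit x hx, hsplit y hy]
  nlinarith

lemma tendsto_rpow_sub_rpow_of_le_of_le_add {α : Type*} {l : Filter α} {f g : α → ℝ}
    {δ M : ℝ} (hδ0 : 0 ≤ δ) (hδ1 : δ < 1) (hf : Tendsto f l atTop)
    (hfg : ∀ᶠ x in l, f x ≤ g x ∧ g x ≤ f x + M) :
    Tendsto (fun x => g x ^ δ - f x ^ δ) l (𝓝 0) := by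
  have hbound : Tendsto (fun x => M * f x ^ (δ - 1)) l (𝓝 0) := by
    simpa using ((tendsto_rpow_neg_atTop (y := 1 - δ) (by linarith)).comp hf).const_mul M
  refine squeeze_zero' ?_ ?_ hbound
  · filter_upwards [hfg, hf.eventually_gt_atTop 0] with x hx hfx
    exact sub_nonneg.mpr (rpow_le_rpow hfx.le hx.1 hδ0)
  · filter_upwards [hfg, hf.eventually_gt_atTop 0] with x hx hfx
    calc g x ^ δ - f x ^ δ ≤ (g x - f x) * f x ^ (δ - 1) :=
          rpow_sub_rpow_le_mul_rpow_sub_one hfx hx.1 hδ1.le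
      _ ≤ M * f x ^ (δ - 1) := by gcongr; linarith [hx.2]

lemma tendsto_exp_log_rpow_div_exp_log_rpow {δ c C₁ C₂ : ℝ} (hδ0 : 0 ≤ δ) (hδ1 : δ < 1)
    (hc : 1 < c) (hC₁ : 0 ≤ C₁) (hC₂ : 0 ≤ C₂) :
    Tendsto (fun t => exp (log (t + C₁) ^ δ) / exp (log (c * t + C₂) ^ δ)) atTop (𝓝 1) := by
  have hlog : Tendsto (fun t => log (t + C₁)) atTop atTop :=
    tendsto_log_atTop.comp (tendsto_atTop_add_const_right _ C₁ tendsto_id)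
  have hsandwich : ∀ᶠ t in atTop, log (t + C₁) ≤ log (c * t + C₂) ∧
      log (c * t + C₂) ≤ log (t + C₁) + log (c + 1) := by
    filter_upwards [eventually_ge_atTop (C₁ / (c - 1)), eventually_ge_atTop C₂,
      eventually_gt_atTop 0] with t htC₁ htC₂ ht
    have hcC₁ : C₁ ≤ (c - 1) * t := (div_le_iff₀' (by linarith)).mp htC₁
    refine ⟨log_le_log (by linarith) (by linarith), ?_⟩
    rw [← log_mul (by linarith) (by linarith)]
    exact log_le_log (by nlinarith) (by nlinarith)
  have hdiff := (tendsto_rpow_sub_rpow_of_le_of_le_add hδ0 hδ1 hlog hsandwich).neg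
  rw [neg_zero] at hdiff
  have hexp := (continuous_exp.tendsto 0).comp hdiff
  simpa only [Function.comp_def, neg_sub, exp_zero, exp_sub] using hexp

/-- Convergence to the max margin for sub-poly-exponential tails under gradient flow:
for the dataset `x₁ = (1,0)`, `x₂ = (0,2)` with loss tail
`−ℓ'(u) = exp(−(log u)^ε − log(ε (log u)^{ε−1}) + log u)` with `ε > 1`, the gradient flow
has explicit solutions `w₁(t) = exp((log(t + C̃₁))^{1/ε})`,
`2w₂(t) = exp((log(4t + C̃₂))^{1/ε})` and `w₁(t)/w₂(t) → 2 = ŵ₁/ŵ₂`, the coordinate ratio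
of the max-margin separator `ŵ = (1, 1/2)`. -/
theorem gradient_flow_subpolyexp_max_margin
    (ε : ℝ) (hε : 1 < ε) (w₁ w₂ : ℝ → ℝ)
    (hw₁0 : Real.exp 1 < w₁ 0) (hw₂0 : Real.exp 1 < 2 * w₂ 0)
    (hd₁ : ∀ t : ℝ, 0 ≤ t → HasDerivAt w₁
      (Real.exp (-(Real.log (w₁ t) ^ ε)) * w₁ t /
        (ε * Real.log (w₁ t) ^ (ε - 1))) t)
    (hd₂ : ∀ t : ℝ, 0 ≤ t → HasDerivAt w₂
      (2 * (Real.exp (-(Real.log (2 * w₂ t) ^ ε)) * (2 * w₂ t) /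
        (ε * Real.log (2 * w₂ t) ^ (ε - 1)))) t) :
    (∀ t : ℝ, 0 ≤ t →
      w₁ t = Real.exp
        ((Real.log (t + Real.exp (Real.log (w₁ 0) ^ ε))) ^ (1 / ε)) ∧
      2 * w₂ t = Real.exp
        ((Real.log (4 * t + Real.exp (Real.log (2 * w₂ 0) ^ ε))) ^ (1 / ε))) ∧
    Tendsto (fun t => w₁ t / w₂ t) atTop (nhds 2) := by
  have hε0 : 0 < ε := one_pos.trans hε
  have hw₁ : ∀ t, 0 ≤ t → w₁ t = exp (log (t + exp (log (w₁ 0) ^ ε)) ^ (1 / ε)) :=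
    fun t ht => by
      simpa using eq_exp_log_rpow_of_subpolyexpVelocity hε0 one_pos hw₁0
        (fun s hs => (hd₁ s hs).congr_deriv (one_mul _).symm) ht
  have hw₂ : ∀ t, 0 ≤ t →
      2 * w₂ t = exp (log (4 * t + exp (log (2 * w₂ 0) ^ ε)) ^ (1 / ε)) :=
    fun t ht => eq_exp_log_rpow_of_subpolyexpVelocity (w := fun s => 2 * w₂ s) hε0
      four_pos hw₂0 (fun s hs => ((hd₂ s hs).const_mul 2).congr_deriv
        (by unfold subpolyexpVelocity; ring)) ht
  refine ⟨fun t ht => ⟨hw₁ t ht, hw₂ t ht⟩, ?_⟩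
  have hratio := (tendsto_exp_log_rpow_div_exp_log_rpow (C₁ := exp (log (w₁ 0) ^ ε))
    (C₂ := exp (log (2 * w₂ 0) ^ ε)) (by positivity)
    ((div_lt_one hε0).mpr hε) (by norm_num : (1 : ℝ) < 4) (exp_pos _).le
    (exp_pos _).le).const_mul 2
  rw [mul_one] at hratio
  refine hratio.congr' ?_
  filter_upwards [eventually_ge_atTop 0] with t ht
  rw [← hw₁ t ht, ← hw₂ t ht, ← mul_div_assoc, mul_div_mul_left _ _ two_ne_zero]
end
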